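/- For every integer k ≥ 3 and every real number J, there exists a multilinear polynomial g of degree at most 2 in k + (k−2) real variables such that for every x = (x₁,…,x_k) ∈ {0,1}^k, the minimum of g(x, a) over all ancilla assignments a ∈ {0,1}^{k−2} equals J·x₁·x₂·⋯·x_k. -/
import Mathlib


/-- A function `g : (Fin n → ℝ) → ℝ` is given by a multilinear polynomial of
degree at most `d`: it is a linear combination of monomials `∏ i ∈ S, v i`
over subsets `S` of cardinality at most `d`. -/
def IsMultilinearDeg (d n : ℕ) (g : (Fin n → ℝ) → ℝ) : Prop :=
  ∃ c : Finset (Fin n) → ℝ, (∀ S, d < S.card → c S = 0) ∧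
    ∀ v, g v = ∑ S : Finset (Fin n), c S * ∏ i ∈ S, v i


namespace KLocalAux

/-! ### gadget -/

def Hand (u w z : ℝ) : ℝ := 3*z + u*w - 2*z*u - 2*z*w

lemma Hand_nonneg {u w z : ℝ} (hu : u = 0 ∨ u = 1) (hw : w = 0 ∨ w = 1)
    (hz : z = 0 ∨ z = 1) : 0 ≤ Hand u w z := by
  rcases hu with rfl|rfl <;> rcases hw with rfl|rfl <;> rcases hz with rfl|rfl <;>
    norm_num [Hand]

lemma Hand_zero_or_one_le {u w z : ℝ} (hu : u = 0 ∨ u = 1) (hw : w = 0 ∨ w = 1)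
    (hz : z = 0 ∨ z = 1) : Hand u w z = 0 ∨ 1 ≤ Hand u w z := by
  rcases hu with rfl|rfl <;> rcases hw with rfl|rfl <;> rcases hz with rfl|rfl <;>
    norm_num [Hand]

lemma Hand_eq_zero_iff {u w z : ℝ} (hu : u = 0 ∨ u = 1) (hw : w = 0 ∨ w = 1)
    (hz : z = 0 ∨ z = 1) : Hand u w z = 0 ↔ z = u * w := by
  rcases hu with rfl|rfl <;> rcases hw with rfl|rfl <;> rcases hz with rfl|rfl <;>
    norm_num [Hand]

/-! ### closure lemmas -/

lemma ml_const (d n : ℕ) (r : ℝ) : IsMultilinearDeg d n (fun _ => r) := by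
  classical
  refine ⟨fun S => if S = ∅ then r else 0, ?_, ?_⟩
  · intro S hS
    dsimp only
    split
    · next h => subst h; simp at hS
    · rfl
  · intro v
    rw [Finset.sum_eq_single (∅ : Finset (Fin n))]
    · simp
    · intro b _ hb; simp [hb]
    · simp

lemma ml_add {d n : ℕ} {g h : (Fin n → ℝ) → ℝ} (hg : IsMultilinearDeg d n g)
    (hh : IsMultilinearDeg d n h) : IsMultilinearDeg d n (fun v => g v + h v) := by
  obtain ⟨c1, hc1, he1⟩ := hg
  obtain ⟨c2, hc2, he2⟩ := hh
  refine ⟨fun S => c1 S + c2 S, fun S hS => by dsimp only; rw [hc1 S hS, hc2 S hS, add_zero], fun v => ?_⟩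
  simp only [he1, he2, add_mul, Finset.sum_add_distrib]

lemma ml_const_mul {d n : ℕ} {g : (Fin n → ℝ) → ℝ} (r : ℝ) (hg : IsMultilinearDeg d n g) :
    IsMultilinearDeg d n (fun v => r * g v) := by
  obtain ⟨c, hc, he⟩ := hg
  refine ⟨fun S => r * c S, fun S hS => by dsimp only; rw [hc S hS, mul_zero], fun v => ?_⟩
  simp only [he, Finset.mul_sum, mul_assoc]

lemma ml_monomial {d n : ℕ} (S : Finset (Fin n)) (hS : S.card ≤ d) :
    IsMultilinearDeg d n (fun v => ∏ i ∈ S, v i) := by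
  classical
  refine ⟨fun T => if T = S then 1 else 0, ?_, ?_⟩
  · intro T hT
    dsimp only
    split
    · next h => subst h; omega
    · rfl
  · intro v
    rw [Finset.sum_eq_single S]
    · simp
    · intro b _ hb; simp [hb]
    · simp

lemma ml_single {n : ℕ} (i : Fin n) : IsMultilinearDeg 2 n (fun v => v i) := by
  have := ml_monomial (d := 2) ({i} : Finset (Fin n)) (by simp)
  simpa using this

lemma ml_pair {n : ℕ} {i j : Fin n} (hij : i ≠ j) :
    IsMultilinearDeg 2 n (fun v => v i * v j) := by
  have := ml_monomial (d := 2) ({i, j} : Finset (Fin n)) (by rw [Finset.card_pair hij])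
  simpa [Finset.prod_pair hij] using this

lemma ml_hand {n : ℕ} {i j z : Fin n} (hij : i ≠ j) (hzi : z ≠ i) (hzj : z ≠ j) :
    IsMultilinearDeg 2 n (fun v => Hand (v i) (v j) (v z)) := by
  have heq : (fun v : Fin n → ℝ => Hand (v i) (v j) (v z)) =
      fun v => (3 : ℝ) * v z + ((v i * v j) + ((-2) * (v z * v i) + (-2) * (v z * v j))) := by
    funext v; simp only [Hand]; ring
  rw [heq]
  exact ml_add (ml_const_mul 3 (ml_single z))
    (ml_add (ml_pair hij)
      (ml_add (ml_const_mul (-2) (ml_pair hzi)) (ml_const_mul (-2) (ml_pair hzj))))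

lemma ml_sum {d n : ℕ} {ι : Type*} (s : Finset ι) (f : ι → (Fin n → ℝ) → ℝ)
    (hf : ∀ j ∈ s, IsMultilinearDeg d n (f j)) :
    IsMultilinearDeg d n (fun v => ∑ j ∈ s, f j v) := by
  classical
  induction s using Finset.cons_induction with
  | empty => simpa using ml_const d n 0
  | cons a s ha ih =>
    simp only [Finset.sum_cons]
    exact ml_add (hf a (Finset.mem_cons_self a s))
      (ih fun j hj => hf j (Finset.mem_cons_of_mem hj))

lemma bool_prod {ι : Type*} (s : Finset ι) (f : ι → ℝ) (hf : ∀ i ∈ s, f i = 0 ∨ f i = 1) :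
    (∏ i ∈ s, f i) = 0 ∨ (∏ i ∈ s, f i) = 1 := by
  classical
  refine Finset.prod_induction f (fun r => r = 0 ∨ r = 1) ?_ (Or.inr rfl) hf
  rintro a b (rfl|rfl) (rfl|rfl) <;> norm_num

/-! ### the construction, with `k = l + 3`, `k - 2 = l + 1` -/

def xi (l : ℕ) (i : Fin (l+3)) : Fin (l+3+(l+1)) := Fin.castAdd (l+1) i
def ai (l : ℕ) (j : Fin (l+1)) : Fin (l+3+(l+1)) := Fin.natAdd (l+3) j

def uIdx (l : ℕ) (j : Fin (l+1)) : Fin (l+3+(l+1)) :=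
  if j.val = 0 then xi l 0 else ai l ⟨j.val - 1, by omega⟩

def wIdx (l : ℕ) (j : Fin (l+1)) : Fin (l+3+(l+1)) :=
  xi l ⟨j.val + 1, by omega⟩

def gdef (l : ℕ) (J : ℝ) (v : Fin (l+3+(l+1)) → ℝ) : ℝ :=
  (2*|J|+1) * ∑ j : Fin (l+1), Hand (v (uIdx l j)) (v (wIdx l j)) (v (ai l j))
    + J * (v (ai l ⟨l, by omega⟩) * v (xi l ⟨l+2, by omega⟩))

lemma xi_ne_ai (l : ℕ) (i : Fin (l+3)) (j : Fin (l+1)) : xi l i ≠ ai l j := by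
  rw [Fin.ne_iff_vne]
  simp only [xi, ai, Fin.coe_castAdd, Fin.coe_natAdd]
  omega

lemma ai_ne_ai (l : ℕ) {i j : Fin (l+1)} (h : i.val ≠ j.val) : ai l i ≠ ai l j := by
  rw [Fin.ne_iff_vne]
  simp only [ai, Fin.coe_natAdd]
  omega

lemma xi_ne_xi (l : ℕ) {i j : Fin (l+3)} (h : i.val ≠ j.val) : xi l i ≠ xi l j := by
  rw [Fin.ne_iff_vne]
  simp only [xi, Fin.coe_castAdd]
  exact h

lemma gdef_ml (l : ℕ) (J : ℝ) : IsMultilinearDeg 2 (l+3+(l+1)) (gdef l J) := by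
  have : gdef l J = fun v =>
      (2*|J|+1) * (∑ j : Fin (l+1), Hand (v (uIdx l j)) (v (wIdx l j)) (v (ai l j)))
        + J * (v (ai l ⟨l, by omega⟩) * v (xi l ⟨l+2, by omega⟩)) := rfl
  rw [this]
  refine ml_add (ml_const_mul _ (ml_sum Finset.univ _ fun j _ => ?_))
    (ml_const_mul _ (ml_pair (Ne.symm (xi_ne_ai l _ _))))
  refine ml_hand ?_ ?_ ?_
  · unfold uIdx wIdx
    split
    · exact xi_ne_xi l (by simp)
    · exact Ne.symm (xi_ne_ai l _ _)
  · unfold uIdx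
    split
    · exact Ne.symm (xi_ne_ai l _ _)
    · next h => exact ai_ne_ai l (by simpa using fun hh => h (by omega))
  · exact (xi_ne_ai l _ _).symm

lemma gdef_isLeast (l : ℕ) (J : ℝ) (x : Fin (l+3) → ℝ) (hx : ∀ i, x i = 0 ∨ x i = 1) :
    IsLeast {r : ℝ | ∃ a : Fin (l+1) → ℝ,
        (∀ j, a j = 0 ∨ a j = 1) ∧ gdef l J (Fin.append x a) = r}
      (J * ∏ i, x i) := by
  classical
  set xe : ℕ → ℝ := fun i => if h : i < l+3 then x ⟨i, h⟩ else 1 with hxe_def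
  have hxx : ∀ (t : ℕ) (ht : t < l+3), x ⟨t, ht⟩ = xe t := by
    intro t ht
    simp only [hxe_def]
    rw [dif_pos ht]
  have hxe : ∀ i, xe i = 0 ∨ xe i = 1 := by
    intro i
    rw [hxe_def]
    dsimp only
    split
    · exact hx _
    · exact Or.inr rfl
  set A : ℕ → ℝ := fun t => ∏ i ∈ Finset.range (t+2), xe i with hA_def
  have hA : ∀ t, A t = 0 ∨ A t = 1 := fun t => bool_prod _ _ fun i _ => hxe i
  have hAs : ∀ t, A (t+1) = A t * xe (t+2) := by
    intro t
    rw [hA_def]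
    exact Finset.prod_range_succ xe (t+2)
  have hA0 : A 0 = xe 0 * xe 1 := by
    rw [hA_def]
    simp [Finset.prod_range_succ]
  have hx0 : x 0 = xe 0 := by
    rw [show (0 : Fin (l+3)) = ⟨0, by omega⟩ from rfl]
    exact hxx 0 (by omega)
  have hprod : (∏ i, x i) = A l * xe (l+2) := by
    have h1 : (∏ i, x i) = ∏ i ∈ Finset.range (l+3), xe i := by
      rw [← Fin.prod_univ_eq_prod_range xe (l+3)]
      exact Finset.prod_congr rfl fun i _ => hxx i.val i.isLt
    rw [h1, Finset.prod_range_succ]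
  constructor
  · -- membership: canonical ancilla
    refine ⟨fun j => A j.val, fun j => hA _, ?_⟩
    set v := Fin.append x (fun j : Fin (l+1) => A j.val) with hv_def
    have hvx : ∀ i, v (xi l i) = x i := fun i => Fin.append_left x _ i
    have hva : ∀ j, v (ai l j) = A j.val := fun j => Fin.append_right x _ j
    have hzero : ∀ j : Fin (l+1),
        Hand (v (uIdx l j)) (v (wIdx l j)) (v (ai l j)) = 0 := by
      intro j
      rw [hva]
      have hw : v (wIdx l j) = xe (j.val + 1) := by
        rw [wIdx, hvx]; exact hxx _ _
      rcases Nat.eq_zero_or_pos j.val with hj | hj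
      · have hu : uIdx l j = xi l 0 := by rw [uIdx, if_pos hj]
        rw [hu, hvx, hx0, hw, hj]
        rw [Hand_eq_zero_iff (hxe 0) (hxe 1) (hA 0)]
        exact hA0
      · have hu : uIdx l j = ai l ⟨j.val - 1, by omega⟩ := by
          rw [uIdx, if_neg (by omega)]
        rw [hu, hva, hw]
        rw [Hand_eq_zero_iff (hA _) (hxe _) (hA _)]
        have := hAs (j.val - 1)
        rw [show j.val - 1 + 1 = j.val by omega, show j.val - 1 + 2 = j.val + 1 by omega] at this
        exact this
    rw [gdef, Finset.sum_eq_zero fun j _ => hzero j, mul_zero, zero_add,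
      hva, hvx, hprod]
    rw [hxx (l+2) (by omega)]
  · -- lower bound
    rintro r ⟨a, ha, rfl⟩
    set v := Fin.append x a with hv_def
    have hv : ∀ p, v p = 0 ∨ v p = 1 := by
      intro p
      refine Fin.addCases (fun i => ?_) (fun j => ?_) p
      · rw [hv_def, Fin.append_left]; exact hx i
      · rw [hv_def, Fin.append_right]; exact ha j
    have hvx : ∀ i, v (xi l i) = x i := fun i => Fin.append_left x _ i
    have hva : ∀ j, v (ai l j) = a j := fun j => Fin.append_right x _ j
    set P : Fin (l+1) → ℝ :=
      fun j => Hand (v (uIdx l j)) (v (wIdx l j)) (v (ai l j)) with hP_def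
    have hPnn : ∀ j, 0 ≤ P j := fun j => Hand_nonneg (hv _) (hv _) (hv _)
    have habs : (0:ℝ) ≤ |J| := abs_nonneg J
    have hbt : v (ai l ⟨l, by omega⟩) * v (xi l ⟨l+2, by omega⟩) = 0 ∨
        v (ai l ⟨l, by omega⟩) * v (xi l ⟨l+2, by omega⟩) = 1 := by
      rcases hv (ai l ⟨l, by omega⟩) with h1 | h1 <;>
        rcases hv (xi l ⟨l+2, by omega⟩) with h2 | h2 <;> rw [h1, h2] <;> norm_num
    have hJp : J * ∏ i, x i ≤ |J| := by
      rcases bool_prod Finset.univ x (fun i _ => hx i) with h | h <;> rw [h]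
      · simpa using habs
      · simpa using le_abs_self J
    by_cases hall : ∀ j, P j = 0
    · -- forced ancilla values
      have key : ∀ t (ht : t < l+1), a ⟨t, ht⟩ = A t := by
        intro t
        induction t with
        | zero =>
          intro ht
          have h0 : Hand (v (uIdx l ⟨0, ht⟩)) (v (wIdx l ⟨0, ht⟩))
              (v (ai l ⟨0, ht⟩)) = 0 := hall ⟨0, ht⟩
          have hu : uIdx l ⟨0, ht⟩ = xi l 0 := by rw [uIdx, if_pos rfl]
          have hw : wIdx l ⟨0, ht⟩ = xi l ⟨1, by omega⟩ := rfl
          rw [hu, hw, hvx, hvx, hva] at h0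
          rw [Hand_eq_zero_iff (hx _) (hx _) (ha _)] at h0
          rw [h0, hx0, hxx 1 (by omega), hA0]
        | succ t ih =>
          intro ht
          have h0 : Hand (v (uIdx l ⟨t+1, ht⟩)) (v (wIdx l ⟨t+1, ht⟩))
              (v (ai l ⟨t+1, ht⟩)) = 0 := hall ⟨t+1, ht⟩
          have hu : uIdx l ⟨t+1, ht⟩ = ai l ⟨t, by omega⟩ := by
            rw [uIdx, if_neg (by simp)]
            rfl
          have hw : wIdx l ⟨t+1, ht⟩ = xi l ⟨t+2, by omega⟩ := rfl
          rw [hu, hw, hvx, hva, hva] at h0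
          rw [Hand_eq_zero_iff (ha _) (hx _) (ha _)] at h0
          rw [h0, ih (by omega), hxx (t+2) (by omega), hAs]
      have hsum : ∑ j : Fin (l+1), P j = 0 :=
        Finset.sum_eq_zero fun j _ => hall j
      have : gdef l J v = J * ∏ i, x i := by
        rw [gdef]
        rw [show (∑ j : Fin (l+1), Hand (v (uIdx l j)) (v (wIdx l j)) (v (ai l j)))
          = ∑ j : Fin (l+1), P j from rfl, hsum, mul_zero, zero_add]
        rw [hva, hvx, key l (by omega), hprod, hxx (l+2) (by omega)]
      rw [this]
    · -- some penalty is at least 1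
      push_neg at hall
      obtain ⟨j0, hj0⟩ := hall
      have h1 : 1 ≤ P j0 := by
        rcases Hand_zero_or_one_le (hv (uIdx l j0)) (hv (wIdx l j0)) (hv (ai l j0))
          with h | h
        · exact absurd h hj0
        · exact h
      have hS : 1 ≤ ∑ j : Fin (l+1), P j :=
        le_trans h1 (Finset.single_le_sum (fun i _ => hPnn i) (Finset.mem_univ j0))
      have hJt : -|J| ≤ J * (v (ai l ⟨l, by omega⟩) * v (xi l ⟨l+2, by omega⟩)) := by
        rcases hbt with h | h <;> rw [h]
        · simpa using habs
        · simpa using neg_abs_le J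
      have : gdef l J v = (2*|J|+1) * ∑ j : Fin (l+1), P j
          + J * (v (ai l ⟨l, by omega⟩) * v (xi l ⟨l+2, by omega⟩)) := rfl
      rw [this]
      nlinarith [hS, habs, hJt, hJp]

end KLocalAux

/-- Theorem 2 of the paper: for every `k ≥ 3` and real `J`, there is a quadratic
(2-local) multilinear polynomial `g` in `k + (k−2)` variables such that for each
Boolean `x ∈ {0,1}^k`, minimizing `g(x, a)` over Boolean ancilla assignments
`a ∈ {0,1}^{k−2}` yields exactly `J·x₁·x₂⋯x_k`. -/
theorem k_local_product_two_local_reduction (k : ℕ) (hk : 3 ≤ k) (J : ℝ) :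
    ∃ g : (Fin (k + (k - 2)) → ℝ) → ℝ,
      IsMultilinearDeg 2 (k + (k - 2)) g ∧
      ∀ x : Fin k → ℝ, (∀ i, x i = 0 ∨ x i = 1) →
        IsLeast {r : ℝ | ∃ a : Fin (k - 2) → ℝ,
            (∀ j, a j = 0 ∨ a j = 1) ∧ g (Fin.append x a) = r}
          (J * ∏ i, x i) := by
  obtain ⟨l, rfl⟩ : ∃ l, k = l + 3 := ⟨k - 3, by omega⟩
  exact ⟨KLocalAux.gdef l J, KLocalAux.gdef_ml l J, KLocalAux.gdef_isLeast l J⟩
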